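/- For any $\alpha \in \mathbb{R}^k$ and positive definite $\Omega \in \mathbb{R}^{k \times k}$, the function $f(z) = 2\,\phi_k(z; \Omega)\,\Phi(\alpha^\top z)$ integrates to 1 over $\mathbb{R}^k$, where $\phi_k(\cdot;\Omega)$ is the mean-zero multivariate normal density with covariance $\Omega$ and $\Phi$ is the standard normal CDF. -/

import Mathlib

/-!
Since `Φ(t) + Φ(-t) = 1` and `φ_k(·; Ω)` is even, averaging the integrand over `z` and `-z`
leaves `φ_k(z; Ω)`, so the integral equals `∫ φ_k(·; Ω) = 1`. For the latter, write
`Ω⁻¹ = Bᵀ B`; the substitution `z ↦ B z` turns the density into a product of one-dimensional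
Gaussians.
-/

open MeasureTheory Real Set Matrix

/-- Standard normal density. -/
noncomputable def stdNormalPdf (x : ℝ) : ℝ :=
  (Real.sqrt (2 * Real.pi))⁻¹ * Real.exp (-x ^ 2 / 2)

/-- Standard normal cumulative distribution function. -/
noncomputable def stdNormalCdf (x : ℝ) : ℝ := ∫ t in Iic x, stdNormalPdf t

/-- Mean-zero multivariate normal density with covariance matrix `Ω`. -/
noncomputable def mvnPdf {k : ℕ} (Ω : Matrix (Fin k) (Fin k) ℝ) (z : Fin k → ℝ) : ℝ :=
  (Real.sqrt ((2 * Real.pi) ^ k * Ω.det))⁻¹ * Real.exp (-(z ⬝ᵥ (Ω⁻¹ *ᵥ z)) / 2)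

lemma stdNormalPdf_eq_gaussianPDFReal : stdNormalPdf = ProbabilityTheory.gaussianPDFReal 0 1 := by
  ext x
  simp only [stdNormalPdf, ProbabilityTheory.gaussianPDFReal]
  norm_num

lemma stdNormalPdf_nonneg (x : ℝ) : 0 ≤ stdNormalPdf x := by
  rw [stdNormalPdf_eq_gaussianPDFReal]
  exact ProbabilityTheory.gaussianPDFReal_nonneg 0 1 x

lemma integrable_stdNormalPdf : Integrable stdNormalPdf := by
  rw [stdNormalPdf_eq_gaussianPDFReal]
  exact ProbabilityTheory.integrable_gaussianPDFReal 0 1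

lemma integral_stdNormalPdf : ∫ x, stdNormalPdf x = 1 := by
  rw [stdNormalPdf_eq_gaussianPDFReal]
  exact ProbabilityTheory.integral_gaussianPDFReal_eq_one 0 one_ne_zero

lemma stdNormalCdf_add_stdNormalCdf_neg (x : ℝ) : stdNormalCdf x + stdNormalCdf (-x) = 1 := by
  have hneg : stdNormalCdf (-x) = ∫ t in Ioi x, stdNormalPdf t := by
    rw [stdNormalCdf, ← integral_comp_neg_Ioi]
    simp [stdNormalPdf]
  rw [stdNormalCdf, hneg, ← compl_Iic,
    integral_add_compl measurableSet_Iic integrable_stdNormalPdf, integral_stdNormalPdf]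

lemma stdNormalCdf_nonneg (x : ℝ) : 0 ≤ stdNormalCdf x :=
  setIntegral_nonneg measurableSet_Iic fun t _ ↦ stdNormalPdf_nonneg t

lemma stdNormalCdf_le_one (x : ℝ) : stdNormalCdf x ≤ 1 :=
  integral_stdNormalPdf ▸ setIntegral_le_integral integrable_stdNormalPdf
    (Filter.Eventually.of_forall stdNormalPdf_nonneg)

lemma norm_stdNormalCdf_le_one (x : ℝ) : ‖stdNormalCdf x‖ ≤ 1 := by
  rw [Real.norm_of_nonneg (stdNormalCdf_nonneg x)]
  exact stdNormalCdf_le_one x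

lemma monotone_stdNormalCdf : Monotone stdNormalCdf := fun _ _ hab ↦
  setIntegral_mono_set integrable_stdNormalPdf.integrableOn
    (Filter.Eventually.of_forall stdNormalPdf_nonneg) (Iic_subset_Iic.mpr hab).eventuallyLE

lemma measurable_stdNormalCdf : Measurable stdNormalCdf := monotone_stdNormalCdf.measurable

theorem two_mul_integral_mul_eq_integral_of_add_neg_eq_one {E : Type*} [MeasurableSpace E]
    [AddGroup E] [MeasurableNeg E] {μ : Measure E} [μ.IsNegInvariant] {p g : E → ℝ} {C : ℝ}
    (hp : Integrable p μ) (hp_neg : ∀ x, p (-x) = p x) (hg_meas : AEStronglyMeasurable g μ)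
    (hg_bdd : ∀ᵐ x ∂μ, ‖g x‖ ≤ C) (hg_neg : ∀ x, g x + g (-x) = 1) :
    2 * ∫ x, p x * g x ∂μ = ∫ x, p x ∂μ := by
  have hpg : Integrable (fun x ↦ p x * g x) μ := hp.mul_bdd hg_meas hg_bdd
  have hpg_neg : Integrable (fun x ↦ p x * g (-x)) μ := by
    simpa only [hp_neg] using hpg.comp_neg
  have hflip : ∫ x, p x * g (-x) ∂μ = ∫ x, p x * g x ∂μ := by
    simpa only [hp_neg] using integral_neg_eq_self (fun x ↦ p x * g x) μ
  calc 2 * ∫ x, p x * g x ∂μ = ∫ x, p x * g x ∂μ + ∫ x, p x * g (-x) ∂μ := by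
        rw [hflip, two_mul]
    _ = ∫ x, p x ∂μ := by
        rw [← integral_add hpg hpg_neg]
        simp only [← mul_add, hg_neg, mul_one]

section LinearChangeOfVariables

variable {ι : Type*} [Fintype ι] [DecidableEq ι] {M : Matrix ι ι ℝ}

lemma measurableEmbedding_mulVec (hM : M.det ≠ 0) : MeasurableEmbedding (M *ᵥ ·) :=
  ((Matrix.toLin' M).equivOfDetNeZero (by rwa [LinearMap.det_toLin'])).toContinuousLinearEquiv
    |>.toHomeomorph.measurableEmbedding

lemma map_mulVec_volume (hM : M.det ≠ 0) :
    Measure.map (M *ᵥ ·) volume = ENNReal.ofReal |M.det⁻¹| • volume :=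
  Real.map_matrix_volume_pi_eq_smul_volume_pi hM

lemma integral_comp_mulVec {F : Type*} [NormedAddCommGroup F] [NormedSpace ℝ F]
    (hM : M.det ≠ 0) (g : (ι → ℝ) → F) : ∫ x, g (M *ᵥ x) = |M.det|⁻¹ • ∫ y, g y := by
  rw [← (measurableEmbedding_mulVec hM).integral_map, map_mulVec_volume hM, integral_smul_measure,
    ENNReal.toReal_ofReal (abs_nonneg _), abs_inv]

lemma integrable_comp_mulVec_iff {F : Type*} [NormedAddCommGroup F]
    (hM : M.det ≠ 0) {g : (ι → ℝ) → F} : Integrable (fun x ↦ g (M *ᵥ x)) ↔ Integrable g := by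
  rw [← Function.comp_def, ← (measurableEmbedding_mulVec hM).integrable_map_iff,
    map_mulVec_volume hM, integrable_smul_measure (by simpa using hM) ENNReal.ofReal_ne_top]

end LinearChangeOfVariables

section Gaussian

variable {ι : Type*} [Fintype ι]

lemma exp_neg_dotProduct_self_div_two_eq_prod (y : ι → ℝ) :
    exp (-(y ⬝ᵥ y) / 2) = ∏ i, exp (-(1 / 2) * y i ^ 2) := by
  rw [← exp_sum]
  congr 1
  simp only [dotProduct, Finset.sum_div, ← Finset.sum_neg_distrib, neg_div]
  exact Finset.sum_congr rfl fun i _ ↦ by ring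

lemma integrable_exp_neg_dotProduct_self_div_two :
    Integrable fun y : ι → ℝ ↦ exp (-(y ⬝ᵥ y) / 2) := by
  simp only [exp_neg_dotProduct_self_div_two_eq_prod]
  exact Integrable.fintype_prod fun _ ↦ integrable_exp_neg_mul_sq (by norm_num)

lemma integral_exp_neg_dotProduct_self_div_two :
    ∫ y : ι → ℝ, exp (-(y ⬝ᵥ y) / 2) = √(2 * π) ^ Fintype.card ι := by
  simp only [exp_neg_dotProduct_self_div_two_eq_prod]
  rw [volume_pi, integral_fintype_prod_eq_pow (fun x : ℝ ↦ exp (-(1 / 2) * x ^ 2)),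
    integral_gaussian, div_div_eq_mul_div, div_one, mul_comm]

lemma dotProduct_transpose_mul_self_mulVec (B : Matrix ι ι ℝ) (x : ι → ℝ) :
    x ⬝ᵥ (Bᵀ * B) *ᵥ x = B *ᵥ x ⬝ᵥ B *ᵥ x := by
  rw [← mulVec_mulVec, dotProduct_mulVec, vecMul_transpose]

variable [DecidableEq ι] {B M : Matrix ι ι ℝ}

lemma integrable_exp_neg_mulVec_dotProduct_self_div_two (hB : B.det ≠ 0) :
    Integrable fun x : ι → ℝ ↦ exp (-(B *ᵥ x ⬝ᵥ B *ᵥ x) / 2) :=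
  (integrable_comp_mulVec_iff hB (g := fun y ↦ exp (-(y ⬝ᵥ y) / 2))).mpr
    integrable_exp_neg_dotProduct_self_div_two

lemma integral_exp_neg_mulVec_dotProduct_self_div_two (hB : B.det ≠ 0) :
    ∫ x : ι → ℝ, exp (-(B *ᵥ x ⬝ᵥ B *ᵥ x) / 2) = √(2 * π) ^ Fintype.card ι / |B.det| := by
  rw [integral_comp_mulVec hB (fun y ↦ exp (-(y ⬝ᵥ y) / 2)),
    integral_exp_neg_dotProduct_self_div_two, smul_eq_mul, inv_mul_eq_div]

lemma Matrix.PosDef.exists_transpose_mul_self (hM : M.PosDef) : ∃ B : Matrix ι ι ℝ, M = Bᵀ * B := by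
  open scoped MatrixOrder in
  obtain ⟨B, hB⟩ := CStarAlgebra.nonneg_iff_eq_star_mul_self.mp hM.posSemidef.nonneg
  exact ⟨B, by rwa [star_eq_conjTranspose, conjTranspose_eq_transpose_of_trivial] at hB⟩

lemma integrable_exp_neg_dotProduct_mulVec_div_two (hM : M.PosDef) :
    Integrable fun x : ι → ℝ ↦ exp (-(x ⬝ᵥ M *ᵥ x) / 2) := by
  obtain ⟨B, rfl⟩ := hM.exists_transpose_mul_self
  have hB : B.det ≠ 0 := right_ne_zero_of_mul (by simpa only [det_mul] using hM.det_pos.ne')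
  simpa only [dotProduct_transpose_mul_self_mulVec] using
    integrable_exp_neg_mulVec_dotProduct_self_div_two hB

lemma integral_exp_neg_dotProduct_mulVec_div_two (hM : M.PosDef) :
    ∫ x : ι → ℝ, exp (-(x ⬝ᵥ M *ᵥ x) / 2) = √(2 * π) ^ Fintype.card ι / √M.det := by
  obtain ⟨B, rfl⟩ := hM.exists_transpose_mul_self
  have hB : B.det ≠ 0 := right_ne_zero_of_mul (by simpa only [det_mul] using hM.det_pos.ne')
  simp only [dotProduct_transpose_mul_self_mulVec]
  rw [integral_exp_neg_mulVec_dotProduct_self_div_two hB, det_mul, det_transpose,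
    sqrt_mul_self_eq_abs]

end Gaussian

section MultivariateNormal

variable {k : ℕ} {Ω : Matrix (Fin k) (Fin k) ℝ}

lemma mvnPdf_neg (Ω : Matrix (Fin k) (Fin k) ℝ) (z : Fin k → ℝ) : mvnPdf Ω (-z) = mvnPdf Ω z := by
  simp only [mvnPdf, mulVec_neg, dotProduct_neg, neg_dotProduct, neg_neg]

lemma integrable_mvnPdf (hΩ : Ω.PosDef) : Integrable (mvnPdf Ω) :=
  (integrable_exp_neg_dotProduct_mulVec_div_two hΩ.inv).const_mul _

lemma integral_mvnPdf (hΩ : Ω.PosDef) : ∫ z, mvnPdf Ω z = 1 := by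
  have hdet := hΩ.det_pos
  have hsqrt_pow : √((2 * π) ^ k) = √(2 * π) ^ k := by
    rw [← sqrt_sq (by positivity : 0 ≤ √(2 * π) ^ k), ← pow_mul, mul_comm k, pow_mul,
      sq_sqrt (by positivity)]
  simp only [mvnPdf]
  rw [integral_const_mul, integral_exp_neg_dotProduct_mulVec_div_two hΩ.inv, det_nonsing_inv,
    Ring.inverse_eq_inv, sqrt_inv, sqrt_mul (by positivity), hsqrt_pow, Fintype.card_fin]
  field_simp

end MultivariateNormal

/-- The multivariate skew-normal density `2 φ_k(z; Ω) Φ(αᵀ z)` integrates to 1. -/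
theorem mv_skewNormal_integrates_to_one {k : ℕ}
    (Ω : Matrix (Fin k) (Fin k) ℝ) (hΩ : Ω.PosDef) (α : Fin k → ℝ) :
    ∫ z : Fin k → ℝ, 2 * mvnPdf Ω z * stdNormalCdf (α ⬝ᵥ z) = 1 := by
  have hΦ_meas : AEStronglyMeasurable (fun z : Fin k → ℝ ↦ stdNormalCdf (α ⬝ᵥ z)) volume :=
    (measurable_stdNormalCdf.comp (by fun_prop : Continuous (α ⬝ᵥ ·)).measurable).aestronglyMeasurable
  have hΦ_neg (z : Fin k → ℝ) : stdNormalCdf (α ⬝ᵥ z) + stdNormalCdf (α ⬝ᵥ -z) = 1 := by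
    rw [dotProduct_neg, stdNormalCdf_add_stdNormalCdf_neg]
  calc ∫ z, 2 * mvnPdf Ω z * stdNormalCdf (α ⬝ᵥ z)
      = 2 * ∫ z, mvnPdf Ω z * stdNormalCdf (α ⬝ᵥ z) := by
        simp only [mul_assoc, integral_const_mul]
    _ = ∫ z, mvnPdf Ω z :=
        two_mul_integral_mul_eq_integral_of_add_neg_eq_one (integrable_mvnPdf hΩ) (mvnPdf_neg Ω)
          hΦ_meas (.of_forall fun _ ↦ norm_stdNormalCdf_le_one _) hΦ_neg
    _ = 1 := integral_mvnPdf hΩ
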